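/- arXiv:nlin/0011039 — 3 statements merged into one kernel-verified Lean document; each statement's English description precedes it below -/
import Mathlib

section
/- Let N ≥ 1 and let ψ, φ : ℝ³ → ℝ^N be smooth functions of (x, y, t) satisfying the vector Nonlinear Schrödinger system ψ_y = ψ_xx + 2⟨ψ,φ⟩ψ, −φ_y = φ_xx + 2⟨ψ,φ⟩φ, together with its third-order symmetry ψ_t = ψ_xxx + 3⟨ψ,φ⟩ψ_x + 3⟨ψ_x,φ⟩ψ, φ_t = φ_xxx + 3⟨ψ,φ⟩φ_x + 3⟨ψ,φ_x⟩φ. Then the functions u := −2⟨ψ,φ⟩ and q := 2⟨ψ,φ_x⟩ − 2⟨ψ_x,φ⟩ satisfy the Kadomtsev–Petviashvili equation 4u_t = u_xxx − 6 u u_x + 3 q_y together with the constraint q_x = u_y. -/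
noncomputable def pdx {V : Type*} [NormedAddCommGroup V] [NormedSpace ℝ V]
    (f : ℝ → ℝ → ℝ → V) : ℝ → ℝ → ℝ → V :=
  fun x y t => deriv (fun s => f s y t) x

noncomputable def pdy {V : Type*} [NormedAddCommGroup V] [NormedSpace ℝ V]
    (f : ℝ → ℝ → ℝ → V) : ℝ → ℝ → ℝ → V :=
  fun x y t => deriv (fun s => f x s t) y

noncomputable def pdt {V : Type*} [NormedAddCommGroup V] [NormedSpace ℝ V]
    (f : ℝ → ℝ → ℝ → V) : ℝ → ℝ → ℝ → V :=
  fun x y t => deriv (fun s => f x y s) t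

def dot {N : ℕ} (a b : Fin N → ℝ) : ℝ := ∑ i, a i * b i

namespace KPaux

abbrev P3 : Type := ℝ × ℝ × ℝ

noncomputable def pd {V : Type*} [NormedAddCommGroup V] [NormedSpace ℝ V]
    (e : P3) (F : P3 → V) : P3 → V := fun p => fderiv ℝ F p e

variable {V : Type*} [NormedAddCommGroup V] [NormedSpace ℝ V]

lemma one_le_top : ((⊤ : ℕ∞) : WithTop ℕ∞) ≠ 0 := by simp

lemma contDiff_pd (e : P3) {F : P3 → V} (hF : ContDiff ℝ (⊤ : ℕ∞) F) :
    ContDiff ℝ (⊤ : ℕ∞) (pd e F) :=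
  (hF.fderiv_right le_rfl).clm_apply contDiff_const

lemma pd_comm (a b : P3) {F : P3 → V} (hF : ContDiff ℝ (⊤ : ℕ∞) F) (p : P3) :
    pd a (pd b F) p = pd b (pd a F) p := by
  have hd : ContDiff ℝ (⊤ : ℕ∞) (fderiv ℝ F) := hF.fderiv_right le_rfl
  have h1 : ∀ e : P3, HasFDerivAt (fun q => fderiv ℝ F q e)
      ((ContinuousLinearMap.apply ℝ V e).comp (fderiv ℝ (fderiv ℝ F) p)) p := fun e =>
    (ContinuousLinearMap.apply ℝ V e).hasFDerivAt.comp p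
      ((hd.differentiable one_le_top p).hasFDerivAt)
  have hsymm := second_derivative_symmetric (f := F) (f' := fderiv ℝ F)
      (f'' := fderiv ℝ (fderiv ℝ F) p)
      (fun y => (hF.differentiable one_le_top y).hasFDerivAt)
      ((hd.differentiable one_le_top p).hasFDerivAt) a b
  calc pd a (pd b F) p = fderiv ℝ (fderiv ℝ F) p a b := by
        show fderiv ℝ (fun q => fderiv ℝ F q b) p a = _
        rw [(h1 b).fderiv]; rfl
    _ = fderiv ℝ (fderiv ℝ F) p b a := hsymm
    _ = pd b (pd a F) p := by
        show _ = fderiv ℝ (fun q => fderiv ℝ F q a) p b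
        rw [(h1 a).fderiv]; rfl


lemma pd_add (e : P3) {F G : P3 → V} {p : P3}
    (hF : DifferentiableAt ℝ F p) (hG : DifferentiableAt ℝ G p) :
    pd e (fun q => F q + G q) p = pd e F p + pd e G p := by
  simp [pd, fderiv_fun_add hF hG]

lemma pd_neg (e : P3) {F : P3 → V} {p : P3} :
    pd e (fun q => -F q) p = -pd e F p := by
  simp [pd, fderiv_neg]

lemma pd_sub (e : P3) {F G : P3 → ℝ} {p : P3}
    (hF : DifferentiableAt ℝ F p) (hG : DifferentiableAt ℝ G p) :
    pd e (fun q => F q - G q) p = pd e F p - pd e G p := by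
  simp [pd, fderiv_fun_sub hF hG]

lemma pd_const_mul (e : P3) {F : P3 → ℝ} {p : P3}
    (hF : DifferentiableAt ℝ F p) (c : ℝ) :
    pd e (fun q => c * F q) p = c * pd e F p := by
  simp [pd, fderiv_const_mul hF]

lemma pd_smul (e : P3) {c : P3 → ℝ} {F : P3 → V} {p : P3}
    (hc : DifferentiableAt ℝ c p) (hF : DifferentiableAt ℝ F p) :
    pd e (fun q => c q • F q) p = pd e c p • F p + c p • pd e F p := by
  show fderiv ℝ (fun q => c q • F q) p e = _
  rw [(hc.hasFDerivAt.fun_smul hF.hasFDerivAt).fderiv]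
  simp [pd]
  module

section dotlem

variable {N : ℕ}

lemma dot_add_left (a b c : Fin N → ℝ) : dot (a + b) c = dot a c + dot b c := by
  simp [dot, add_mul, Finset.sum_add_distrib]

lemma dot_add_right (a b c : Fin N → ℝ) : dot a (b + c) = dot a b + dot a c := by
  simp [dot, mul_add, Finset.sum_add_distrib]

lemma dot_smul_left (r : ℝ) (a b : Fin N → ℝ) : dot (r • a) b = r * dot a b := by
  simp [dot, Finset.mul_sum, mul_assoc]

lemma dot_smul_right (r : ℝ) (a b : Fin N → ℝ) : dot a (r • b) = r * dot a b := by
  simp only [dot, Pi.smul_apply, smul_eq_mul, Finset.mul_sum]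
  exact Finset.sum_congr rfl fun i _ => by ring

lemma dot_neg_left (a b : Fin N → ℝ) : dot (-a) b = -dot a b := by
  simp [dot]

lemma dot_neg_right (a b : Fin N → ℝ) : dot a (-b) = -dot a b := by
  simp [dot]

lemma contDiff_dot {F G : P3 → Fin N → ℝ}
    (hF : ContDiff ℝ (⊤ : ℕ∞) F) (hG : ContDiff ℝ (⊤ : ℕ∞) G) :
    ContDiff ℝ (⊤ : ℕ∞) (fun q => dot (F q) (G q)) := by
  unfold dot
  exact ContDiff.sum fun i _ => (contDiff_pi.mp hF i).mul (contDiff_pi.mp hG i)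

lemma pd_dot (e : P3) {F G : P3 → Fin N → ℝ} {p : P3}
    (hF : DifferentiableAt ℝ F p) (hG : DifferentiableAt ℝ G p) :
    pd e (fun q => dot (F q) (G q)) p = dot (pd e F p) (G p) + dot (F p) (pd e G p) := by
  have h : HasFDerivAt (fun q => dot (F q) (G q))
      (∑ i : Fin N, (F p i • ((ContinuousLinearMap.proj i).comp (fderiv ℝ G p)) +
        G p i • ((ContinuousLinearMap.proj i).comp (fderiv ℝ F p)))) p := by
    have h1 : ∀ i : Fin N, HasFDerivAt (fun q => F q i * G q i)
        (F p i • ((ContinuousLinearMap.proj i).comp (fderiv ℝ G p)) +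
         G p i • ((ContinuousLinearMap.proj i).comp (fderiv ℝ F p))) p := fun i => by
      exact (((ContinuousLinearMap.proj i).hasFDerivAt.comp p hF.hasFDerivAt).fun_mul
       ((ContinuousLinearMap.proj (R := ℝ) (φ := fun _ : Fin N => ℝ) i).hasFDerivAt.comp p
         hG.hasFDerivAt))
    have h2 := HasFDerivAt.fun_sum (fun i (_ : i ∈ Finset.univ) => h1 i)
    simpa [dot] using h2
  show fderiv ℝ (fun q => dot (F q) (G q)) p e = _
  rw [h.fderiv]
  simp [dot, pd, Finset.sum_add_distrib, mul_comm]
  ring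

end dotlem

lemma pdx_eq {x y t : ℝ} (F : P3 → V) (hF : DifferentiableAt ℝ F (x, y, t)) :
    pdx (fun a b c => F (a, b, c)) x y t = pd (1, 0, 0) F (x, y, t) := by
  have hl : HasDerivAt (fun s : ℝ => ((s, y, t) : P3)) (1, 0, 0) x :=
    (hasDerivAt_id x).prodMk ((hasDerivAt_const x y).prodMk (hasDerivAt_const x t))
  have h := HasFDerivAt.comp_hasDerivAt_of_eq (x := x) hF.hasFDerivAt hl rfl
  simpa [pdx, pd, Function.comp_def] using h.deriv

lemma pdy_eq {x y t : ℝ} (F : P3 → V) (hF : DifferentiableAt ℝ F (x, y, t)) :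
    pdy (fun a b c => F (a, b, c)) x y t = pd (0, 1, 0) F (x, y, t) := by
  have hl : HasDerivAt (fun s : ℝ => ((x, s, t) : P3)) (0, 1, 0) y :=
    (hasDerivAt_const y x).prodMk ((hasDerivAt_id y).prodMk (hasDerivAt_const y t))
  have h := HasFDerivAt.comp_hasDerivAt_of_eq (x := y) hF.hasFDerivAt hl rfl
  simpa [pdy, pd, Function.comp_def] using h.deriv

lemma pdt_eq {x y t : ℝ} (F : P3 → V) (hF : DifferentiableAt ℝ F (x, y, t)) :
    pdt (fun a b c => F (a, b, c)) x y t = pd (0, 0, 1) F (x, y, t) := by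
  have hl : HasDerivAt (fun s : ℝ => ((x, y, s) : P3)) (0, 0, 1) t :=
    (hasDerivAt_const t x).prodMk ((hasDerivAt_const t y).prodMk (hasDerivAt_id t))
  have h := HasFDerivAt.comp_hasDerivAt_of_eq (x := t) hF.hasFDerivAt hl rfl
  simpa [pdt, pd, Function.comp_def] using h.deriv


section twothree

variable {N : ℕ}

lemma pd_pd_dot (a b : P3) {F G : P3 → Fin N → ℝ}
    (hF : ContDiff ℝ (⊤ : ℕ∞) F) (hG : ContDiff ℝ (⊤ : ℕ∞) G) (p : P3) :
    pd a (pd b (fun q => dot (F q) (G q))) p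
      = dot (pd a (pd b F) p) (G p) + dot (pd b F p) (pd a G p)
        + dot (pd a F p) (pd b G p) + dot (F p) (pd a (pd b G) p) := by
  have dF := hF.differentiable one_le_top
  have dG := hG.differentiable one_le_top
  have dFb := (contDiff_pd b hF).differentiable one_le_top
  have dGb := (contDiff_pd b hG).differentiable one_le_top
  have E : pd b (fun q => dot (F q) (G q)) =
      fun r => dot (pd b F r) (G r) + dot (F r) (pd b G r) :=
    funext fun r => pd_dot b (dF r) (dG r)
  rw [E, pd_add a (F := fun r => dot (pd b F r) (G r)) (G := fun r => dot (F r) (pd b G r))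
      ((contDiff_dot (contDiff_pd b hF) hG).differentiable one_le_top p)
      ((contDiff_dot hF (contDiff_pd b hG)).differentiable one_le_top p),
    pd_dot a (dFb p) (dG p), pd_dot a (dF p) (dGb p)]
  ring

lemma pd_pd_pd_dot (a b c : P3) {F G : P3 → Fin N → ℝ}
    (hF : ContDiff ℝ (⊤ : ℕ∞) F) (hG : ContDiff ℝ (⊤ : ℕ∞) G) (p : P3) :
    pd a (pd b (pd c (fun q => dot (F q) (G q)))) p
      = dot (pd a (pd b (pd c F)) p) (G p)
      + dot (pd b (pd c F) p) (pd a G p)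
      + dot (pd a (pd c F) p) (pd b G p)
      + dot (pd c F p) (pd a (pd b G) p)
      + dot (pd a (pd b F) p) (pd c G p)
      + dot (pd b F p) (pd a (pd c G) p)
      + dot (pd a F p) (pd b (pd c G) p)
      + dot (F p) (pd a (pd b (pd c G)) p) := by
  have dF := hF.differentiable one_le_top
  have dG := hG.differentiable one_le_top
  have c1 : ContDiff ℝ (⊤ : ℕ∞) fun r => dot (pd b (pd c F) r) (G r) :=
    contDiff_dot (contDiff_pd b (contDiff_pd c hF)) hG
  have c2 : ContDiff ℝ (⊤ : ℕ∞) fun r => dot (pd c F r) (pd b G r) :=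
    contDiff_dot (contDiff_pd c hF) (contDiff_pd b hG)
  have c3 : ContDiff ℝ (⊤ : ℕ∞) fun r => dot (pd b F r) (pd c G r) :=
    contDiff_dot (contDiff_pd b hF) (contDiff_pd c hG)
  have c4 : ContDiff ℝ (⊤ : ℕ∞) fun r => dot (F r) (pd b (pd c G) r) :=
    contDiff_dot hF (contDiff_pd b (contDiff_pd c hG))
  have E : pd b (pd c (fun q => dot (F q) (G q))) = fun r =>
      dot (pd b (pd c F) r) (G r) + dot (pd c F r) (pd b G r)
      + dot (pd b F r) (pd c G r) + dot (F r) (pd b (pd c G) r) :=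
    funext fun r => pd_pd_dot b c hF hG r
  rw [E,
    pd_add a (F := fun r => dot (pd b (pd c F) r) (G r) + dot (pd c F r) (pd b G r)
        + dot (pd b F r) (pd c G r)) (G := fun r => dot (F r) (pd b (pd c G) r))
      (((c1.add c2).add c3).differentiable one_le_top p) (c4.differentiable one_le_top p),
    pd_add a (F := fun r => dot (pd b (pd c F) r) (G r) + dot (pd c F r) (pd b G r))
      (G := fun r => dot (pd b F r) (pd c G r))
      ((c1.add c2).differentiable one_le_top p) (c3.differentiable one_le_top p),
    pd_add a (F := fun r => dot (pd b (pd c F) r) (G r))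
      (G := fun r => dot (pd c F r) (pd b G r))
      (c1.differentiable one_le_top p) (c2.differentiable one_le_top p),
    pd_dot a ((contDiff_pd b (contDiff_pd c hF)).differentiable one_le_top p) (dG p),
    pd_dot a ((contDiff_pd c hF).differentiable one_le_top p)
      ((contDiff_pd b hG).differentiable one_le_top p),
    pd_dot a ((contDiff_pd b hF).differentiable one_le_top p)
      ((contDiff_pd c hG).differentiable one_le_top p),
    pd_dot a (dF p) ((contDiff_pd b (contDiff_pd c hG)).differentiable one_le_top p)]
  ring

end twothree


lemma KP_main {N : ℕ} (Ψ Φ : P3 → Fin N → ℝ)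
    (hΨ : ContDiff ℝ (⊤ : ℕ∞) Ψ) (hΦ : ContDiff ℝ (⊤ : ℕ∞) Φ)
    (H1 : ∀ p, pd (0,1,0) Ψ p = pd (1,0,0) (pd (1,0,0) Ψ) p + (2 * dot (Ψ p) (Φ p)) • Ψ p)
    (H2 : ∀ p, pd (0,1,0) Φ p = -(pd (1,0,0) (pd (1,0,0) Φ) p + (2 * dot (Ψ p) (Φ p)) • Φ p))
    (H3 : ∀ p, pd (0,0,1) Ψ p = pd (1,0,0) (pd (1,0,0) (pd (1,0,0) Ψ)) p
        + (3 * dot (Ψ p) (Φ p)) • pd (1,0,0) Ψ p + (3 * dot (pd (1,0,0) Ψ p) (Φ p)) • Ψ p)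
    (H4 : ∀ p, pd (0,0,1) Φ p = pd (1,0,0) (pd (1,0,0) (pd (1,0,0) Φ)) p
        + (3 * dot (Ψ p) (Φ p)) • pd (1,0,0) Φ p + (3 * dot (Ψ p) (pd (1,0,0) Φ p)) • Φ p) :
    (∀ p, 4 * pd (0,0,1) (fun q => -2 * dot (Ψ q) (Φ q)) p =
      pd (1,0,0) (pd (1,0,0) (pd (1,0,0) (fun q => -2 * dot (Ψ q) (Φ q)))) p
      - 6 * (-2 * dot (Ψ p) (Φ p)) * pd (1,0,0) (fun q => -2 * dot (Ψ q) (Φ q)) p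
      + 3 * pd (0,1,0) (fun q => 2 * dot (Ψ q) (pd (1,0,0) Φ q)
          - 2 * dot (pd (1,0,0) Ψ q) (Φ q)) p) ∧
    (∀ p, pd (1,0,0) (fun q => 2 * dot (Ψ q) (pd (1,0,0) Φ q)
        - 2 * dot (pd (1,0,0) Ψ q) (Φ q)) p
      = pd (0,1,0) (fun q => -2 * dot (Ψ q) (Φ q)) p) := by
  have dΨ : Differentiable ℝ Ψ := hΨ.differentiable one_le_top
  have dΦ : Differentiable ℝ Φ := hΦ.differentiable one_le_top
  have hΨx := contDiff_pd ((1:ℝ),(0:ℝ),(0:ℝ)) hΨ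
  have dΨx := hΨx.differentiable one_le_top
  have hΨxx := contDiff_pd ((1:ℝ),(0:ℝ),(0:ℝ)) hΨx
  have dΨxx := hΨxx.differentiable one_le_top
  have hΦx := contDiff_pd ((1:ℝ),(0:ℝ),(0:ℝ)) hΦ
  have dΦx := hΦx.differentiable one_le_top
  have hΦxx := contDiff_pd ((1:ℝ),(0:ℝ),(0:ℝ)) hΦx
  have dΦxx := hΦxx.differentiable one_le_top
  have hS : ContDiff ℝ (⊤ : ℕ∞) (fun q => dot (Ψ q) (Φ q)) := contDiff_dot hΨ hΦ
  have dS := hS.differentiable one_le_top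
  have hSx := contDiff_pd ((1:ℝ),(0:ℝ),(0:ℝ)) hS
  have dSx := hSx.differentiable one_le_top
  have hSxx := contDiff_pd ((1:ℝ),(0:ℝ),(0:ℝ)) hSx
  have dSxx := hSxx.differentiable one_le_top
  -- derivatives of u = -2 S
  have EUx : pd (1,0,0) (fun q => -2 * dot (Ψ q) (Φ q))
      = fun p => -2 * pd (1,0,0) (fun q => dot (Ψ q) (Φ q)) p :=
    funext fun p => pd_const_mul (1,0,0) (dS p) (-2)
  have EUxx : pd (1,0,0) (pd (1,0,0) (fun q => -2 * dot (Ψ q) (Φ q)))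
      = fun p => -2 * pd (1,0,0) (pd (1,0,0) (fun q => dot (Ψ q) (Φ q))) p := by
    rw [EUx]
    exact funext fun p => pd_const_mul (1,0,0)
      (F := pd (1,0,0) (fun q => dot (Ψ q) (Φ q))) (dSx p) (-2)
  have EUxxx : ∀ p, pd (1,0,0) (pd (1,0,0) (pd (1,0,0) (fun q => -2 * dot (Ψ q) (Φ q)))) p
      = -2 * pd (1,0,0) (pd (1,0,0) (pd (1,0,0) (fun q => dot (Ψ q) (Φ q)))) p := by
    intro p; rw [EUxx]
    exact pd_const_mul (1,0,0)
      (F := pd (1,0,0) (pd (1,0,0) (fun q => dot (Ψ q) (Φ q)))) (dSxx p) (-2)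
  -- y-derivatives as functions
  have EΨy : pd (0,1,0) Ψ
      = fun p => pd (1,0,0) (pd (1,0,0) Ψ) p + (2 * dot (Ψ p) (Φ p)) • Ψ p := funext H1
  have EΦy : pd (0,1,0) Φ
      = fun p => -(pd (1,0,0) (pd (1,0,0) Φ) p + (2 * dot (Ψ p) (Φ p)) • Φ p) := funext H2
  -- mixed second derivatives
  have CΨ : ∀ p, pd (0,1,0) (pd (1,0,0) Ψ) p
      = pd (1,0,0) (pd (1,0,0) (pd (1,0,0) Ψ)) p
        + (2 * (dot (pd (1,0,0) Ψ p) (Φ p) + dot (Ψ p) (pd (1,0,0) Φ p))) • Ψ p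
        + (2 * dot (Ψ p) (Φ p)) • pd (1,0,0) Ψ p := by
    intro p
    rw [pd_comm (0,1,0) (1,0,0) hΨ p, EΨy,
      pd_add (1,0,0) (F := pd (1,0,0) (pd (1,0,0) Ψ))
        (G := fun q => (2 * dot (Ψ q) (Φ q)) • Ψ q) (dΨxx p)
        (((contDiff_const.mul hS).smul hΨ).differentiable one_le_top p),
      pd_smul (1,0,0) (c := fun q => 2 * dot (Ψ q) (Φ q))
        ((contDiff_const.mul hS).differentiable one_le_top p) (dΨ p),
      pd_const_mul (1,0,0) (dS p) 2, pd_dot (1,0,0) (dΨ p) (dΦ p)]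
    module
  have CΦ : ∀ p, pd (0,1,0) (pd (1,0,0) Φ) p
      = -(pd (1,0,0) (pd (1,0,0) (pd (1,0,0) Φ)) p
        + (2 * (dot (pd (1,0,0) Ψ p) (Φ p) + dot (Ψ p) (pd (1,0,0) Φ p))) • Φ p
        + (2 * dot (Ψ p) (Φ p)) • pd (1,0,0) Φ p) := by
    intro p
    rw [pd_comm (0,1,0) (1,0,0) hΦ p, EΦy,
      pd_neg (1,0,0)
        (F := fun q => pd (1,0,0) (pd (1,0,0) Φ) q + (2 * dot (Ψ q) (Φ q)) • Φ q),
      pd_add (1,0,0) (F := pd (1,0,0) (pd (1,0,0) Φ))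
        (G := fun q => (2 * dot (Ψ q) (Φ q)) • Φ q) (dΦxx p)
        (((contDiff_const.mul hS).smul hΦ).differentiable one_le_top p),
      pd_smul (1,0,0) (c := fun q => 2 * dot (Ψ q) (Φ q))
        ((contDiff_const.mul hS).differentiable one_le_top p) (dΦ p),
      pd_const_mul (1,0,0) (dS p) 2, pd_dot (1,0,0) (dΨ p) (dΦ p)]
    module
  constructor
  · intro p
    have L : pd (0,0,1) (fun q => -2 * dot (Ψ q) (Φ q)) p
        = -2 * (dot (pd (0,0,1) Ψ p) (Φ p) + dot (Ψ p) (pd (0,0,1) Φ p)) := by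
      rw [pd_const_mul (0,0,1) (dS p) (-2), pd_dot (0,0,1) (dΨ p) (dΦ p)]
    have RQ : pd (0,1,0) (fun q => 2 * dot (Ψ q) (pd (1,0,0) Φ q)
          - 2 * dot (pd (1,0,0) Ψ q) (Φ q)) p
        = 2 * (dot (pd (0,1,0) Ψ p) (pd (1,0,0) Φ p)
            + dot (Ψ p) (pd (0,1,0) (pd (1,0,0) Φ) p))
          - 2 * (dot (pd (0,1,0) (pd (1,0,0) Ψ) p) (Φ p)
            + dot (pd (1,0,0) Ψ p) (pd (0,1,0) Φ p)) := by
      rw [pd_sub (0,1,0) (F := fun q => 2 * dot (Ψ q) (pd (1,0,0) Φ q))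
          (G := fun q => 2 * dot (pd (1,0,0) Ψ q) (Φ q))
          ((contDiff_const.mul (contDiff_dot hΨ hΦx)).differentiable one_le_top p)
          ((contDiff_const.mul (contDiff_dot hΨx hΦ)).differentiable one_le_top p),
        pd_const_mul (0,1,0) ((contDiff_dot hΨ hΦx).differentiable one_le_top p) 2,
        pd_const_mul (0,1,0) ((contDiff_dot hΨx hΦ).differentiable one_le_top p) 2,
        pd_dot (0,1,0) (dΨ p) (dΦx p), pd_dot (0,1,0) (dΨx p) (dΦ p)]
    rw [L, EUxxx p, pd_pd_pd_dot (1,0,0) (1,0,0) (1,0,0) hΨ hΦ p, RQ, CΨ p, CΦ p,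
      pd_const_mul (1,0,0) (dS p) (-2), pd_dot (1,0,0) (dΨ p) (dΦ p),
      H1 p, H2 p, H3 p, H4 p]
    simp only [dot_add_left, dot_add_right, dot_smul_left, dot_smul_right,
      dot_neg_left, dot_neg_right]
    ring
  · intro p
    rw [pd_sub (1,0,0) (F := fun q => 2 * dot (Ψ q) (pd (1,0,0) Φ q))
        (G := fun q => 2 * dot (pd (1,0,0) Ψ q) (Φ q))
        ((contDiff_const.mul (contDiff_dot hΨ hΦx)).differentiable one_le_top p)
        ((contDiff_const.mul (contDiff_dot hΨx hΦ)).differentiable one_le_top p),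
      pd_const_mul (1,0,0) ((contDiff_dot hΨ hΦx).differentiable one_le_top p) 2,
      pd_const_mul (1,0,0) ((contDiff_dot hΨx hΦ).differentiable one_le_top p) 2,
      pd_dot (1,0,0) (dΨ p) (dΦx p), pd_dot (1,0,0) (dΨx p) (dΦ p),
      pd_const_mul (0,1,0) (dS p) (-2), pd_dot (0,1,0) (dΨ p) (dΦ p),
      H1 p, H2 p]
    simp only [dot_add_left, dot_add_right, dot_smul_left, dot_smul_right,
      dot_neg_left, dot_neg_right]
    ring

end KPaux

open KPaux

theorem vector_NLS_symmetry_gives_KP (N : ℕ) (hN : 1 ≤ N)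
    (ψ φ : ℝ → ℝ → ℝ → (Fin N → ℝ))
    (hψ : ContDiff ℝ (⊤ : ℕ∞) (fun p : ℝ × ℝ × ℝ => ψ p.1 p.2.1 p.2.2))
    (hφ : ContDiff ℝ (⊤ : ℕ∞) (fun p : ℝ × ℝ × ℝ => φ p.1 p.2.1 p.2.2))
    (hNLS₁ : ∀ x y t, pdy ψ x y t =
      pdx (pdx ψ) x y t + (2 * dot (ψ x y t) (φ x y t)) • ψ x y t)
    (hNLS₂ : ∀ x y t, -pdy φ x y t =
      pdx (pdx φ) x y t + (2 * dot (ψ x y t) (φ x y t)) • φ x y t)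
    (hSym₁ : ∀ x y t, pdt ψ x y t =
      pdx (pdx (pdx ψ)) x y t + (3 * dot (ψ x y t) (φ x y t)) • pdx ψ x y t
        + (3 * dot (pdx ψ x y t) (φ x y t)) • ψ x y t)
    (hSym₂ : ∀ x y t, pdt φ x y t =
      pdx (pdx (pdx φ)) x y t + (3 * dot (ψ x y t) (φ x y t)) • pdx φ x y t
        + (3 * dot (ψ x y t) (pdx φ x y t)) • φ x y t)
    (u q : ℝ → ℝ → ℝ → ℝ)
    (hu : ∀ x y t, u x y t = -2 * dot (ψ x y t) (φ x y t))
    (hq : ∀ x y t, q x y t =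
      2 * dot (ψ x y t) (pdx φ x y t) - 2 * dot (pdx ψ x y t) (φ x y t)) :
    (∀ x y t, 4 * pdt u x y t =
      pdx (pdx (pdx u)) x y t - 6 * u x y t * pdx u x y t + 3 * pdy q x y t) ∧
    (∀ x y t, pdx q x y t = pdy u x y t) := by
  obtain ⟨Ψ, hΨeq⟩ : ∃ Ψ : P3 → Fin N → ℝ, Ψ = fun p => ψ p.1 p.2.1 p.2.2 := ⟨_, rfl⟩
  obtain ⟨Φ, hΦeq⟩ : ∃ Φ : P3 → Fin N → ℝ, Φ = fun p => φ p.1 p.2.1 p.2.2 := ⟨_, rfl⟩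
  have hψ' : ContDiff ℝ (⊤ : ℕ∞) Ψ := by rw [hΨeq]; exact hψ
  have hφ' : ContDiff ℝ (⊤ : ℕ∞) Φ := by rw [hΦeq]; exact hφ
  have hψΨ : ∀ x y t : ℝ, ψ x y t = Ψ (x, y, t) := by intro x y t; rw [hΨeq]
  have hφΦ : ∀ x y t : ℝ, φ x y t = Φ (x, y, t) := by intro x y t; rw [hΦeq]
  have eψ : ψ = fun a b c => Ψ (a, b, c) := by funext a b c; rw [hΨeq]
  have eφ : φ = fun a b c => Φ (a, b, c) := by funext a b c; rw [hΦeq]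
  have dΨ : Differentiable ℝ Ψ := hψ'.differentiable one_le_top
  have dΦ : Differentiable ℝ Φ := hφ'.differentiable one_le_top
  have hΨx := contDiff_pd ((1:ℝ),(0:ℝ),(0:ℝ)) hψ'
  have dΨx := hΨx.differentiable one_le_top
  have hΨxx := contDiff_pd ((1:ℝ),(0:ℝ),(0:ℝ)) hΨx
  have dΨxx := hΨxx.differentiable one_le_top
  have hΦx := contDiff_pd ((1:ℝ),(0:ℝ),(0:ℝ)) hφ'
  have dΦx := hΦx.differentiable one_le_top
  have hΦxx := contDiff_pd ((1:ℝ),(0:ℝ),(0:ℝ)) hΦx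
  have dΦxx := hΦxx.differentiable one_le_top
  -- pointwise translations for ψ
  have Pψx : ∀ x y t, pdx ψ x y t = pd (1,0,0) Ψ (x,y,t) := by
    intro x y t; rw [eψ]; exact pdx_eq Ψ (dΨ _)
  have Eψx : pdx ψ = fun a b c => pd (1,0,0) Ψ (a,b,c) :=
    funext fun x => funext fun y => funext fun t => Pψx x y t
  have Pψxx : ∀ x y t, pdx (pdx ψ) x y t = pd (1,0,0) (pd (1,0,0) Ψ) (x,y,t) := by
    intro x y t; rw [Eψx]; exact pdx_eq (pd (1,0,0) Ψ) (dΨx _)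
  have Eψxx : pdx (pdx ψ) = fun a b c => pd (1,0,0) (pd (1,0,0) Ψ) (a,b,c) :=
    funext fun x => funext fun y => funext fun t => Pψxx x y t
  have Pψxxx : ∀ x y t, pdx (pdx (pdx ψ)) x y t
      = pd (1,0,0) (pd (1,0,0) (pd (1,0,0) Ψ)) (x,y,t) := by
    intro x y t; rw [Eψxx]; exact pdx_eq (pd (1,0,0) (pd (1,0,0) Ψ)) (dΨxx _)
  have Pψy : ∀ x y t, pdy ψ x y t = pd (0,1,0) Ψ (x,y,t) := by
    intro x y t; rw [eψ]; exact pdy_eq Ψ (dΨ _)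
  have Pψt : ∀ x y t, pdt ψ x y t = pd (0,0,1) Ψ (x,y,t) := by
    intro x y t; rw [eψ]; exact pdt_eq Ψ (dΨ _)
  -- pointwise translations for φ
  have Pφx : ∀ x y t, pdx φ x y t = pd (1,0,0) Φ (x,y,t) := by
    intro x y t; rw [eφ]; exact pdx_eq Φ (dΦ _)
  have Eφx : pdx φ = fun a b c => pd (1,0,0) Φ (a,b,c) :=
    funext fun x => funext fun y => funext fun t => Pφx x y t
  have Pφxx : ∀ x y t, pdx (pdx φ) x y t = pd (1,0,0) (pd (1,0,0) Φ) (x,y,t) := by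
    intro x y t; rw [Eφx]; exact pdx_eq (pd (1,0,0) Φ) (dΦx _)
  have Eφxx : pdx (pdx φ) = fun a b c => pd (1,0,0) (pd (1,0,0) Φ) (a,b,c) :=
    funext fun x => funext fun y => funext fun t => Pφxx x y t
  have Pφxxx : ∀ x y t, pdx (pdx (pdx φ)) x y t
      = pd (1,0,0) (pd (1,0,0) (pd (1,0,0) Φ)) (x,y,t) := by
    intro x y t; rw [Eφxx]; exact pdx_eq (pd (1,0,0) (pd (1,0,0) Φ)) (dΦxx _)
  have Pφy : ∀ x y t, pdy φ x y t = pd (0,1,0) Φ (x,y,t) := by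
    intro x y t; rw [eφ]; exact pdy_eq Φ (dΦ _)
  have Pφt : ∀ x y t, pdt φ x y t = pd (0,0,1) Φ (x,y,t) := by
    intro x y t; rw [eφ]; exact pdt_eq Φ (dΦ _)
  -- uncurried hypotheses
  have H1 : ∀ p : P3, pd (0,1,0) Ψ p
      = pd (1,0,0) (pd (1,0,0) Ψ) p + (2 * dot (Ψ p) (Φ p)) • Ψ p := by
    rintro ⟨x, y, t⟩
    have h := hNLS₁ x y t
    rw [Pψy x y t, Pψxx x y t, hψΨ x y t, hφΦ x y t] at h
    exact h
  have H2 : ∀ p : P3, pd (0,1,0) Φ p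
      = -(pd (1,0,0) (pd (1,0,0) Φ) p + (2 * dot (Ψ p) (Φ p)) • Φ p) := by
    rintro ⟨x, y, t⟩
    have h := hNLS₂ x y t
    rw [Pφy x y t, Pφxx x y t, hψΨ x y t, hφΦ x y t] at h
    exact neg_eq_iff_eq_neg.mp h
  have H3 : ∀ p : P3, pd (0,0,1) Ψ p
      = pd (1,0,0) (pd (1,0,0) (pd (1,0,0) Ψ)) p
        + (3 * dot (Ψ p) (Φ p)) • pd (1,0,0) Ψ p
        + (3 * dot (pd (1,0,0) Ψ p) (Φ p)) • Ψ p := by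
    rintro ⟨x, y, t⟩
    have h := hSym₁ x y t
    rw [Pψt x y t, Pψxxx x y t, Pψx x y t, hψΨ x y t, hφΦ x y t] at h
    exact h
  have H4 : ∀ p : P3, pd (0,0,1) Φ p
      = pd (1,0,0) (pd (1,0,0) (pd (1,0,0) Φ)) p
        + (3 * dot (Ψ p) (Φ p)) • pd (1,0,0) Φ p
        + (3 * dot (Ψ p) (pd (1,0,0) Φ p)) • Φ p := by
    rintro ⟨x, y, t⟩
    have h := hSym₂ x y t
    rw [Pφt x y t, Pφxxx x y t, Pφx x y t, hψΨ x y t, hφΦ x y t] at h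
    exact h
  obtain ⟨G1, G2⟩ := KP_main Ψ Φ hψ' hφ' H1 H2 H3 H4
  -- translations for u and q
  have hU : ContDiff ℝ (⊤ : ℕ∞) (fun r : P3 => -2 * dot (Ψ r) (Φ r)) :=
    contDiff_const.mul (contDiff_dot hψ' hφ')
  have dU := hU.differentiable one_le_top
  have hUx := contDiff_pd ((1:ℝ),(0:ℝ),(0:ℝ)) hU
  have dUx := hUx.differentiable one_le_top
  have hUxx := contDiff_pd ((1:ℝ),(0:ℝ),(0:ℝ)) hUx
  have dUxx := hUxx.differentiable one_le_top
  have hQ : ContDiff ℝ (⊤ : ℕ∞) (fun r : P3 =>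
      2 * dot (Ψ r) (pd (1,0,0) Φ r) - 2 * dot (pd (1,0,0) Ψ r) (Φ r)) :=
    (contDiff_const.mul (contDiff_dot hψ' hΦx)).sub
      (contDiff_const.mul (contDiff_dot hΨx hφ'))
  have dQ := hQ.differentiable one_le_top
  have eu : u = fun a b c => (fun r : P3 => -2 * dot (Ψ r) (Φ r)) (a,b,c) := by
    funext a b c
    rw [hu a b c, hψΨ a b c, hφΦ a b c]
  have eq' : q = fun a b c => (fun r : P3 =>
      2 * dot (Ψ r) (pd (1,0,0) Φ r) - 2 * dot (pd (1,0,0) Ψ r) (Φ r)) (a,b,c) := by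
    funext a b c
    rw [hq a b c, Pφx a b c, Pψx a b c, hψΨ a b c, hφΦ a b c]
  have Put : ∀ x y t, pdt u x y t
      = pd (0,0,1) (fun r : P3 => -2 * dot (Ψ r) (Φ r)) (x,y,t) := by
    intro x y t; rw [eu]; exact pdt_eq _ (dU _)
  have Pux : ∀ x y t, pdx u x y t
      = pd (1,0,0) (fun r : P3 => -2 * dot (Ψ r) (Φ r)) (x,y,t) := by
    intro x y t; rw [eu]; exact pdx_eq _ (dU _)
  have Eux : pdx u = fun a b c =>
      pd (1,0,0) (fun r : P3 => -2 * dot (Ψ r) (Φ r)) (a,b,c) :=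
    funext fun x => funext fun y => funext fun t => Pux x y t
  have Puxx : ∀ x y t, pdx (pdx u) x y t
      = pd (1,0,0) (pd (1,0,0) (fun r : P3 => -2 * dot (Ψ r) (Φ r))) (x,y,t) := by
    intro x y t; rw [Eux]; exact pdx_eq _ (dUx _)
  have Euxx : pdx (pdx u) = fun a b c =>
      pd (1,0,0) (pd (1,0,0) (fun r : P3 => -2 * dot (Ψ r) (Φ r))) (a,b,c) :=
    funext fun x => funext fun y => funext fun t => Puxx x y t
  have Puxxx : ∀ x y t, pdx (pdx (pdx u)) x y t
      = pd (1,0,0) (pd (1,0,0) (pd (1,0,0)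
          (fun r : P3 => -2 * dot (Ψ r) (Φ r)))) (x,y,t) := by
    intro x y t; rw [Euxx]; exact pdx_eq _ (dUxx _)
  have Puy : ∀ x y t, pdy u x y t
      = pd (0,1,0) (fun r : P3 => -2 * dot (Ψ r) (Φ r)) (x,y,t) := by
    intro x y t; rw [eu]; exact pdy_eq _ (dU _)
  have Pqx : ∀ x y t, pdx q x y t = pd (1,0,0) (fun r : P3 =>
      2 * dot (Ψ r) (pd (1,0,0) Φ r) - 2 * dot (pd (1,0,0) Ψ r) (Φ r)) (x,y,t) := by
    intro x y t; rw [eq']; exact pdx_eq _ (dQ _)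
  have Pqy : ∀ x y t, pdy q x y t = pd (0,1,0) (fun r : P3 =>
      2 * dot (Ψ r) (pd (1,0,0) Φ r) - 2 * dot (pd (1,0,0) Ψ r) (Φ r)) (x,y,t) := by
    intro x y t; rw [eq']; exact pdy_eq _ (dQ _)
  refine ⟨fun x y t => ?_, fun x y t => ?_⟩
  · rw [Put x y t, Puxxx x y t, Pux x y t, Pqy x y t, hu x y t, hψΨ x y t, hφΦ x y t]
    exact G1 (x, y, t)
  · rw [Pqx x y t, Puy x y t]
    exact G2 (x, y, t)
end

section
/- Let M, N ≥ 1 and let ψ : ℝ³ → Mat_{M,N}(ℝ), φ : ℝ³ → Mat_{N,M}(ℝ) be smooth functions of (x, y, t) satisfying the matrix NLS system ψ_y = ψ_xx + 2ψφψ, −φ_y = φ_xx + 2φψφ, together with its third-order symmetry ψ_t = ψ_xxx + 3ψφψ_x + 3ψ_xφψ, φ_t = φ_xxx + 3φψφ_x + 3φ_xψφ. Then the M×M-matrix-valued functions u := −2ψφ and q := 2ψφ_x − 2ψ_xφ satisfy the matrix Kadomtsev–Petviashvili equation 4u_t = u_xxx − 3(uu_x + u_x u − q_y + [q,u]) together with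 the constraint q_x = u_y. -/
section Infra

variable {V : Type*} [NormedAddCommGroup V] [NormedSpace ℝ V]

noncomputable def unc3 (f : ℝ → ℝ → ℝ → V) : ℝ × ℝ × ℝ → V :=
  fun p => f p.1 p.2.1 p.2.2

theorem lineX (x y t : ℝ) : HasDerivAt (fun s : ℝ => ((s, y, t) : ℝ × ℝ × ℝ))
    ((1, 0, 0) : ℝ × ℝ × ℝ) x :=
  (hasDerivAt_id x).prodMk (hasDerivAt_const x (y, t))

theorem lineY (x y t : ℝ) : HasDerivAt (fun s : ℝ => ((x, s, t) : ℝ × ℝ × ℝ))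
    ((0, 1, 0) : ℝ × ℝ × ℝ) y :=
  (hasDerivAt_const y x).prodMk ((hasDerivAt_id y).prodMk (hasDerivAt_const y t))

theorem lineT (x y t : ℝ) : HasDerivAt (fun s : ℝ => ((x, y, s) : ℝ × ℝ × ℝ))
    ((0, 0, 1) : ℝ × ℝ × ℝ) t :=
  (hasDerivAt_const t x).prodMk ((hasDerivAt_const t y).prodMk (hasDerivAt_id t))

variable {f : ℝ → ℝ → ℝ → V}

theorem pdx_eq_fderiv (hf : ContDiff ℝ (⊤ : ℕ∞) (unc3 f)) (x y t : ℝ) :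
    pdx f x y t = fderiv ℝ (unc3 f) (x, y, t) (1, 0, 0) :=
  by have h := (((hf.differentiable (by simp) (x, y, t)).hasFDerivAt).comp_hasDerivAt x (lineX x y t)).deriv; exact h

theorem pdy_eq_fderiv (hf : ContDiff ℝ (⊤ : ℕ∞) (unc3 f)) (x y t : ℝ) :
    pdy f x y t = fderiv ℝ (unc3 f) (x, y, t) (0, 1, 0) :=
  by have h := (((hf.differentiable (by simp) (x, y, t)).hasFDerivAt).comp_hasDerivAt y (lineY x y t)).deriv; exact h

theorem pdt_eq_fderiv (hf : ContDiff ℝ (⊤ : ℕ∞) (unc3 f)) (x y t : ℝ) :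
    pdt f x y t = fderiv ℝ (unc3 f) (x, y, t) (0, 0, 1) :=
  by have h := (((hf.differentiable (by simp) (x, y, t)).hasFDerivAt).comp_hasDerivAt t (lineT x y t)).deriv; exact h

theorem hasDerivAt_pdx (hf : ContDiff ℝ (⊤ : ℕ∞) (unc3 f)) (x y t : ℝ) :
    HasDerivAt (fun s => f s y t) (pdx f x y t) x := by
  rw [pdx_eq_fderiv hf]
  exact ((hf.differentiable (by simp) (x, y, t)).hasFDerivAt).comp_hasDerivAt x (lineX x y t)

theorem hasDerivAt_pdy (hf : ContDiff ℝ (⊤ : ℕ∞) (unc3 f)) (x y t : ℝ) :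
    HasDerivAt (fun s => f x s t) (pdy f x y t) y := by
  rw [pdy_eq_fderiv hf]
  exact ((hf.differentiable (by simp) (x, y, t)).hasFDerivAt).comp_hasDerivAt y (lineY x y t)

theorem hasDerivAt_pdt (hf : ContDiff ℝ (⊤ : ℕ∞) (unc3 f)) (x y t : ℝ) :
    HasDerivAt (fun s => f x y s) (pdt f x y t) t := by
  rw [pdt_eq_fderiv hf]
  exact ((hf.differentiable (by simp) (x, y, t)).hasFDerivAt).comp_hasDerivAt t (lineT x y t)

theorem smooth_pdx (hf : ContDiff ℝ (⊤ : ℕ∞) (unc3 f)) :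
    ContDiff ℝ (⊤ : ℕ∞) (unc3 (pdx f)) := by
  have e : unc3 (pdx f) = fun p => fderiv ℝ (unc3 f) p (1, 0, 0) := by
    funext p
    exact pdx_eq_fderiv hf p.1 p.2.1 p.2.2
  rw [e]
  exact (hf.fderiv_right (by exact_mod_cast le_top)).clm_apply contDiff_const


theorem smooth_pdy (hf : ContDiff ℝ (⊤ : ℕ∞) (unc3 f)) :
    ContDiff ℝ (⊤ : ℕ∞) (unc3 (pdy f)) := by
  have e : unc3 (pdy f) = fun p => fderiv ℝ (unc3 f) p (0, 1, 0) := by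
    funext p
    exact pdy_eq_fderiv hf p.1 p.2.1 p.2.2
  rw [e]
  exact (hf.fderiv_right (by exact_mod_cast le_top)).clm_apply contDiff_const

theorem smooth_pdt (hf : ContDiff ℝ (⊤ : ℕ∞) (unc3 f)) :
    ContDiff ℝ (⊤ : ℕ∞) (unc3 (pdt f)) := by
  have e : unc3 (pdt f) = fun p => fderiv ℝ (unc3 f) p (0, 0, 1) := by
    funext p
    exact pdt_eq_fderiv hf p.1 p.2.1 p.2.2
  rw [e]
  exact (hf.fderiv_right (by exact_mod_cast le_top)).clm_apply contDiff_const

end Infra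

section Clairaut
variable {V : Type*} [NormedAddCommGroup V] [NormedSpace ℝ V] {f : ℝ → ℝ → ℝ → V}

theorem fderiv_dir_eq (hf : ContDiff ℝ (⊤ : ℕ∞) (unc3 f)) (p : ℝ × ℝ × ℝ) (v w : ℝ × ℝ × ℝ) :
    fderiv ℝ (fun q => fderiv ℝ (unc3 f) q v) p w =
      fderiv ℝ (fderiv ℝ (unc3 f)) p w v := by
  have hF' : ContDiff ℝ (⊤ : ℕ∞) (fderiv ℝ (unc3 f)) :=
    hf.fderiv_right (by exact_mod_cast le_top)
  have h2 : HasFDerivAt (fderiv ℝ (unc3 f)) (fderiv ℝ (fderiv ℝ (unc3 f)) p) p :=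
    (hF'.differentiable (by simp) p).hasFDerivAt
  have h3 := h2.clm_apply (hasFDerivAt_const v p)
  rw [h3.fderiv]
  simp

theorem snd_symm (hf : ContDiff ℝ (⊤ : ℕ∞) (unc3 f)) (p : ℝ × ℝ × ℝ) (v w : ℝ × ℝ × ℝ) :
    fderiv ℝ (fderiv ℝ (unc3 f)) p v w = fderiv ℝ (fderiv ℝ (unc3 f)) p w v := by
  have hF' : ContDiff ℝ (⊤ : ℕ∞) (fderiv ℝ (unc3 f)) :=
    hf.fderiv_right (by exact_mod_cast le_top)
  exact second_derivative_symmetric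
    (fun q => (hf.differentiable (by simp) q).hasFDerivAt)
    ((hF'.differentiable (by simp) p).hasFDerivAt) v w

theorem pdy_pdx_comm (hf : ContDiff ℝ (⊤ : ℕ∞) (unc3 f)) (x y t : ℝ) :
    pdy (pdx f) x y t = pdx (pdy f) x y t := by
  have e1 : unc3 (pdx f) = fun p => fderiv ℝ (unc3 f) p (1, 0, 0) :=
    funext fun p => pdx_eq_fderiv hf p.1 p.2.1 p.2.2
  have e2 : unc3 (pdy f) = fun p => fderiv ℝ (unc3 f) p (0, 1, 0) :=
    funext fun p => pdy_eq_fderiv hf p.1 p.2.1 p.2.2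
  rw [pdy_eq_fderiv (smooth_pdx hf) x y t, pdx_eq_fderiv (smooth_pdy hf) x y t, e1, e2,
    fderiv_dir_eq hf, fderiv_dir_eq hf, snd_symm hf]
end Clairaut

def mmul {M N K : ℕ} (A : Fin M → Fin N → ℝ) (B : Fin N → Fin K → ℝ) :
    Fin M → Fin K → ℝ :=
  fun i k => ∑ j, A i j * B j k

section MMul
variable {M N K L : ℕ}

theorem mmul_assoc (A : Fin M → Fin N → ℝ) (B : Fin N → Fin K → ℝ) (C : Fin K → Fin L → ℝ) :
    mmul (mmul A B) C = mmul A (mmul B C) := by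
  funext i l
  simp only [mmul, Finset.sum_mul, Finset.mul_sum]
  rw [Finset.sum_comm]
  simp [mul_assoc]

theorem mmul_add (A : Fin M → Fin N → ℝ) (B C : Fin N → Fin K → ℝ) :
    mmul A (B + C) = mmul A B + mmul A C := by
  funext i k
  simp [mmul, mul_add, Finset.sum_add_distrib]

theorem add_mmul (A B : Fin M → Fin N → ℝ) (C : Fin N → Fin K → ℝ) :
    mmul (A + B) C = mmul A C + mmul B C := by
  funext i k
  simp [mmul, add_mul, Finset.sum_add_distrib]

theorem mmul_smul (c : ℝ) (A : Fin M → Fin N → ℝ) (B : Fin N → Fin K → ℝ) :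
    mmul A (c • B) = c • mmul A B := by
  funext i k
  simp [mmul, Finset.mul_sum, mul_left_comm]

theorem smul_mmul (c : ℝ) (A : Fin M → Fin N → ℝ) (B : Fin N → Fin K → ℝ) :
    mmul (c • A) B = c • mmul A B := by
  funext i k
  simp [mmul, Finset.mul_sum, mul_assoc]

theorem mmul_neg (A : Fin M → Fin N → ℝ) (B : Fin N → Fin K → ℝ) :
    mmul A (-B) = -mmul A B := by
  funext i k
  simp [mmul]

theorem neg_mmul (A : Fin M → Fin N → ℝ) (B : Fin N → Fin K → ℝ) :
    mmul (-A) B = -mmul A B := by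
  funext i k
  simp [mmul]

theorem mmul_sub (A : Fin M → Fin N → ℝ) (B C : Fin N → Fin K → ℝ) :
    mmul A (B - C) = mmul A B - mmul A C := by
  rw [sub_eq_add_neg, mmul_add, mmul_neg, sub_eq_add_neg]

theorem sub_mmul (A B : Fin M → Fin N → ℝ) (C : Fin N → Fin K → ℝ) :
    mmul (A - B) C = mmul A C - mmul B C := by
  rw [sub_eq_add_neg, add_mmul, neg_mmul, sub_eq_add_neg]

theorem HasDerivAt.mmul {A : ℝ → Fin M → Fin N → ℝ} {B : ℝ → Fin N → Fin K → ℝ}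
    {A' : Fin M → Fin N → ℝ} {B' : Fin N → Fin K → ℝ} {s : ℝ}
    (hA : HasDerivAt A A' s) (hB : HasDerivAt B B' s) :
    HasDerivAt (fun r => mmul (A r) (B r)) (mmul A' (B s) + mmul (A s) B') s := by
  rw [hasDerivAt_pi]
  intro i
  rw [hasDerivAt_pi]
  intro k
  have h : HasDerivAt (fun r => ∑ j, A r i j * B r j k)
      (∑ j, (A' i j * B s j k + A s i j * B' j k)) s := by
    apply HasDerivAt.fun_sum
    intro j _
    exact ((hasDerivAt_pi.1 (hasDerivAt_pi.1 hA i) j).mul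
      (hasDerivAt_pi.1 (hasDerivAt_pi.1 hB j) k))
  refine h.congr_deriv ?_
  simp [_root_.mmul, Finset.sum_add_distrib]

end MMul
section PdOf
variable {V : Type*} [NormedAddCommGroup V] [NormedSpace ℝ V] {f g : ℝ → ℝ → ℝ → V}

theorem pdx_of (hfg : ∀ x y t, f x y t = g x y t) {v : V} {x y t : ℝ}
    (h : HasDerivAt (fun s => g s y t) v x) : pdx f x y t = v := by
  have e : (fun s => f s y t) = (fun s => g s y t) := funext fun s => hfg s y t
  show deriv (fun s => f s y t) x = v
  rw [e]
  exact h.deriv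

theorem pdy_of (hfg : ∀ x y t, f x y t = g x y t) {v : V} {x y t : ℝ}
    (h : HasDerivAt (fun s => g x s t) v y) : pdy f x y t = v := by
  have e : (fun s => f x s t) = (fun s => g x s t) := funext fun s => hfg x s t
  show deriv (fun s => f x s t) y = v
  rw [e]
  exact h.deriv

theorem pdt_of (hfg : ∀ x y t, f x y t = g x y t) {v : V} {x y t : ℝ}
    (h : HasDerivAt (fun s => g x y s) v t) : pdt f x y t = v := by
  have e : (fun s => f x y s) = (fun s => g x y s) := funext fun s => hfg x y s
  show deriv (fun s => f x y s) t = v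
  rw [e]
  exact h.deriv

end PdOf

def idm {M : ℕ} : Fin M → Fin M → ℝ := fun i j => if i = j then (1 : ℝ) else 0

def mcomm {M : ℕ} (A B : Fin M → Fin M → ℝ) : Fin M → Fin M → ℝ :=
  mmul A B - mmul B A

noncomputable def minv {M : ℕ} (A : Fin M → Fin M → ℝ) : Fin M → Fin M → ℝ :=
  (Matrix.of A)⁻¹


theorem matrix_NLS_symmetry_gives_matrix_KP (M N : ℕ) (hM : 1 ≤ M) (hN : 1 ≤ N)
    (ψ : ℝ → ℝ → ℝ → (Fin M → Fin N → ℝ)) (φ : ℝ → ℝ → ℝ → (Fin N → Fin M → ℝ))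
    (hψ : ContDiff ℝ (⊤ : ℕ∞) (fun p : ℝ × ℝ × ℝ => ψ p.1 p.2.1 p.2.2))
    (hφ : ContDiff ℝ (⊤ : ℕ∞) (fun p : ℝ × ℝ × ℝ => φ p.1 p.2.1 p.2.2))
    (hNLS₁ : ∀ x y t, pdy ψ x y t =
      pdx (pdx ψ) x y t + (2 : ℝ) • mmul (mmul (ψ x y t) (φ x y t)) (ψ x y t))
    (hNLS₂ : ∀ x y t, -pdy φ x y t =
      pdx (pdx φ) x y t + (2 : ℝ) • mmul (mmul (φ x y t) (ψ x y t)) (φ x y t))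
    (hSym₁ : ∀ x y t, pdt ψ x y t = pdx (pdx (pdx ψ)) x y t
        + (3 : ℝ) • mmul (mmul (ψ x y t) (φ x y t)) (pdx ψ x y t)
        + (3 : ℝ) • mmul (mmul (pdx ψ x y t) (φ x y t)) (ψ x y t))
    (hSym₂ : ∀ x y t, pdt φ x y t = pdx (pdx (pdx φ)) x y t
        + (3 : ℝ) • mmul (mmul (φ x y t) (ψ x y t)) (pdx φ x y t)
        + (3 : ℝ) • mmul (mmul (pdx φ x y t) (ψ x y t)) (φ x y t))
    (u q : ℝ → ℝ → ℝ → (Fin M → Fin M → ℝ))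
    (hu : ∀ x y t, u x y t = (-2 : ℝ) • mmul (ψ x y t) (φ x y t))
    (hq : ∀ x y t, q x y t =
      (2 : ℝ) • mmul (ψ x y t) (pdx φ x y t) - (2 : ℝ) • mmul (pdx ψ x y t) (φ x y t)) :
    (∀ x y t, (4 : ℝ) • pdt u x y t =
      pdx (pdx (pdx u)) x y t
        - (3 : ℝ) • (mmul (u x y t) (pdx u x y t) + mmul (pdx u x y t) (u x y t)
            - pdy q x y t + mcomm (q x y t) (u x y t))) ∧
    (∀ x y t, pdx q x y t = pdy u x y t) := by
  have sψ0 : ContDiff ℝ (⊤ : ℕ∞) (unc3 ψ) := hψ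
  have sφ0 : ContDiff ℝ (⊤ : ℕ∞) (unc3 φ) := hφ
  have sψ1 := smooth_pdx sψ0
  have sφ1 := smooth_pdx sφ0
  have sψ2 := smooth_pdx sψ1
  have sφ2 := smooth_pdx sφ1
  -- pdy φ rearranged
  have hφy : ∀ x y t, pdy φ x y t =
      -(pdx (pdx φ) x y t + (2 : ℝ) • mmul (mmul (φ x y t) (ψ x y t)) (φ x y t)) :=
    fun x y t => neg_eq_iff_eq_neg.mp (hNLS₂ x y t)
  -- first x-derivative of u
  have hux : ∀ x y t, pdx u x y t = ((-2 : ℝ) • (mmul (pdx ψ x y t) (φ x y t))) + ((-2 : ℝ) • (mmul (ψ x y t) (pdx φ x y t))) := by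
    intro x y t
    have h := pdx_of hu
      (((hasDerivAt_pdx sψ0 x y t).mmul (hasDerivAt_pdx sφ0 x y t)).const_smul (-2 : ℝ))
    rw [h]; try try simp only [mmul_assoc, mmul_add, add_mmul, mmul_smul, smul_mmul, mmul_sub, sub_mmul, mmul_neg, neg_mmul]
    module
  -- second x-derivative of u
  have huxx : ∀ x y t, pdx (pdx u) x y t =
      ((-2 : ℝ) • (mmul (pdx (pdx ψ) x y t) (φ x y t))) + ((-4 : ℝ) • (mmul (pdx ψ x y t) (pdx φ x y t))) + ((-2 : ℝ) • (mmul (ψ x y t) (pdx (pdx φ) x y t))) := by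
    intro x y t
    have h := pdx_of hux
      (((((hasDerivAt_pdx sψ1 x y t).mmul (hasDerivAt_pdx sφ0 x y t)).const_smul (-2 : ℝ))).add
       ((((hasDerivAt_pdx sψ0 x y t).mmul (hasDerivAt_pdx sφ1 x y t)).const_smul (-2 : ℝ))))
    rw [h]; try try simp only [mmul_assoc, mmul_add, add_mmul, mmul_smul, smul_mmul, mmul_sub, sub_mmul, mmul_neg, neg_mmul]
    module
  -- third x-derivative of u
  have huxxx : ∀ x y t, pdx (pdx (pdx u)) x y t =
      ((-2 : ℝ) • (mmul (pdx (pdx (pdx ψ)) x y t) (φ x y t))) + ((-6 : ℝ) • (mmul (pdx (pdx ψ) x y t) (pdx φ x y t))) + ((-6 : ℝ) • (mmul (pdx ψ x y t) (pdx (pdx φ) x y t))) + ((-2 : ℝ) • (mmul (ψ x y t) (pdx (pdx (pdx φ)) x y t))) := by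
    intro x y t
    have h := pdx_of huxx
      ((((((hasDerivAt_pdx sψ2 x y t).mmul (hasDerivAt_pdx sφ0 x y t)).const_smul (-2 : ℝ))).add
        ((((hasDerivAt_pdx sψ1 x y t).mmul (hasDerivAt_pdx sφ1 x y t)).const_smul (-4 : ℝ)))).add
       ((((hasDerivAt_pdx sψ0 x y t).mmul (hasDerivAt_pdx sφ2 x y t)).const_smul (-2 : ℝ))))
    rw [h]; try try simp only [mmul_assoc, mmul_add, add_mmul, mmul_smul, smul_mmul, mmul_sub, sub_mmul, mmul_neg, neg_mmul]
    module
  -- t-derivative of u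
  have hut : ∀ x y t, pdt u x y t =
      ((-2 : ℝ) • (mmul (pdx (pdx (pdx ψ)) x y t) (φ x y t))) + ((-6 : ℝ) • (mmul (ψ x y t) (mmul (φ x y t) (mmul (pdx ψ x y t) (φ x y t))))) + ((-6 : ℝ) • (mmul (pdx ψ x y t) (mmul (φ x y t) (mmul (ψ x y t) (φ x y t))))) + ((-2 : ℝ) • (mmul (ψ x y t) (pdx (pdx (pdx φ)) x y t))) + ((-6 : ℝ) • (mmul (ψ x y t) (mmul (φ x y t) (mmul (ψ x y t) (pdx φ x y t))))) + ((-6 : ℝ) • (mmul (ψ x y t) (mmul (pdx φ x y t) (mmul (ψ x y t) (φ x y t))))) := by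
    intro x y t
    have h := pdt_of hu
      (((hasDerivAt_pdt sψ0 x y t).mmul (hasDerivAt_pdt sφ0 x y t)).const_smul (-2 : ℝ))
    rw [h, hSym₁ x y t, hSym₂ x y t]; try try simp only [mmul_assoc, mmul_add, add_mmul, mmul_smul, smul_mmul, mmul_sub, sub_mmul, mmul_neg, neg_mmul]
    module
  -- y-derivative of u
  have huy : ∀ x y t, pdy u x y t = ((-2 : ℝ) • (mmul (pdx (pdx ψ) x y t) (φ x y t))) + ((2 : ℝ) • (mmul (ψ x y t) (pdx (pdx φ) x y t))) := by
    intro x y t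
    have h := pdy_of hu
      (((hasDerivAt_pdy sψ0 x y t).mmul (hasDerivAt_pdy sφ0 x y t)).const_smul (-2 : ℝ))
    rw [h, hNLS₁ x y t, hφy x y t]; try try simp only [mmul_assoc, mmul_add, add_mmul, mmul_smul, smul_mmul, mmul_sub, sub_mmul, mmul_neg, neg_mmul]
    module
  -- x-derivative of q
  have hqx : ∀ x y t, pdx q x y t = ((-2 : ℝ) • (mmul (pdx (pdx ψ) x y t) (φ x y t))) + ((2 : ℝ) • (mmul (ψ x y t) (pdx (pdx φ) x y t))) := by
    intro x y t
    have h := pdx_of hq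
      ((((hasDerivAt_pdx sψ0 x y t).mmul (hasDerivAt_pdx sφ1 x y t)).const_smul (2 : ℝ)).sub
       (((hasDerivAt_pdx sψ1 x y t).mmul (hasDerivAt_pdx sφ0 x y t)).const_smul (2 : ℝ)))
    rw [h]; try try simp only [mmul_assoc, mmul_add, add_mmul, mmul_smul, smul_mmul, mmul_sub, sub_mmul, mmul_neg, neg_mmul]
    module
  -- mixed partials via Clairaut and the NLS system
  have haxy : ∀ x y t, pdy (pdx ψ) x y t =
      (pdx (pdx (pdx ψ)) x y t) + ((2 : ℝ) • (mmul (pdx ψ x y t) (mmul (φ x y t) (ψ x y t)))) + ((2 : ℝ) • (mmul (ψ x y t) (mmul (pdx φ x y t) (ψ x y t)))) + ((2 : ℝ) • (mmul (ψ x y t) (mmul (φ x y t) (pdx ψ x y t)))) := by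
    intro x y t
    rw [pdy_pdx_comm sψ0 x y t]
    have h := pdx_of hNLS₁
      ((hasDerivAt_pdx sψ2 x y t).add
        ((((hasDerivAt_pdx sψ0 x y t).mmul (hasDerivAt_pdx sφ0 x y t)).mmul
          (hasDerivAt_pdx sψ0 x y t)).const_smul (2 : ℝ)))
    rw [h]; try try simp only [mmul_assoc, mmul_add, add_mmul, mmul_smul, smul_mmul, mmul_sub, sub_mmul, mmul_neg, neg_mmul]
    module
  have hbxy : ∀ x y t, pdy (pdx φ) x y t =
      -(pdx (pdx (pdx φ)) x y t) + ((-2 : ℝ) • (mmul (pdx φ x y t) (mmul (ψ x y t) (φ x y t)))) + ((-2 : ℝ) • (mmul (φ x y t) (mmul (pdx ψ x y t) (φ x y t)))) + ((-2 : ℝ) • (mmul (φ x y t) (mmul (ψ x y t) (pdx φ x y t)))) := by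
    intro x y t
    rw [pdy_pdx_comm sφ0 x y t]
    have h := pdx_of hφy
      (((hasDerivAt_pdx sφ2 x y t).add
        ((((hasDerivAt_pdx sφ0 x y t).mmul (hasDerivAt_pdx sψ0 x y t)).mmul
          (hasDerivAt_pdx sφ0 x y t)).const_smul (2 : ℝ))).neg)
    rw [h]; try try simp only [mmul_assoc, mmul_add, add_mmul, mmul_smul, smul_mmul, mmul_sub, sub_mmul, mmul_neg, neg_mmul]
    module
  -- y-derivative of q
  have hqy : ∀ x y t, pdy q x y t =
      ((2 : ℝ) • (mmul (pdx (pdx ψ) x y t) (pdx φ x y t))) + ((2 : ℝ) • (mmul (pdx ψ x y t) (pdx (pdx φ) x y t))) + ((-2 : ℝ) • (mmul (pdx (pdx (pdx ψ)) x y t) (φ x y t))) + ((-2 : ℝ) • (mmul (ψ x y t) (pdx (pdx (pdx φ)) x y t))) + ((-8 : ℝ) • (mmul (ψ x y t) (mmul (pdx φ x y t) (mmul (ψ x y t) (φ x y t))))) + ((-8 : ℝ) • (mmul (ψ x y t) (mmul (φ x y t) (mmul (pdx ψ x y t) (φ x y t))))) := by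
    intro x y t
    have h := pdy_of hq
      ((((hasDerivAt_pdy sψ0 x y t).mmul (hasDerivAt_pdy sφ1 x y t)).const_smul (2 : ℝ)).sub
       (((hasDerivAt_pdy sψ1 x y t).mmul (hasDerivAt_pdy sφ0 x y t)).const_smul (2 : ℝ)))
    rw [h, hNLS₁ x y t, hφy x y t, haxy x y t, hbxy x y t]; try try simp only [mmul_assoc, mmul_add, add_mmul, mmul_smul, smul_mmul, mmul_sub, sub_mmul, mmul_neg, neg_mmul]
    module
  refine ⟨fun x y t => ?_, fun x y t => ?_⟩
  · rw [hut x y t, huxxx x y t, hqy x y t, mcomm, hux x y t, hu x y t, hq x y t]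
    try simp only [mmul_assoc, mmul_add, add_mmul, mmul_smul, smul_mmul, mmul_sub, sub_mmul, mmul_neg, neg_mmul]
    module
  · rw [hqx x y t, huy x y t]
end

section
/- Let N ≥ 1 and let ψ, φ : ℝ³ → ℝ^N be smooth functions of (x, y, t). Define the triple product {abc} := ⟨a,b⟩c + ⟨c,b⟩a − ⟨a,c⟩b for a, b, c ∈ ℝ^N. Suppose ψ, φ satisfy the vector Kaup–Newell system ψ_y = ψ_xx + 2∂_x{ψφψ}, φ_y = −φ_xx + 2∂_x{φψφ}, together with its third-order symmetry ψ_t = ∂_x(ψ_xx + 6{ψφψ_x} + 6{ψ{φψφ}ψ}), φ_t = ∂_x(φ_xx − 6{φψφ_x} + 6{φ{ψφψ}φ}). Then the scalar functions f := −2⟨ψ,φ⟩, g := ⟨ψ,ψ⟩, h := ⟨φ,φ⟩, p := 2⟨ψ,φ_x⟩ − 2⟨ψ_x,φ⟩ − 3f² + 6gh satisfy the system: 4f_t = f_xxx + 3∂_y(p − 2gh) + 6(g_xx h − g h_xx) − 2∂_x(6fgh + f³) − 6p f_x with p_x = f_y; −2g_t = g_xxx − 3g_xy + 6f(g_y − g_xx)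 + 3∂_x(g(p − f_x)) + 6g²h_x + 6gf f_x + 9g_x f²; and −2h_t = h_xxx + 3h_xy + 6f(h_y + h_xx) + 3∂_x(h(p + f_x)) + 6h²g_x + 6hf f_x + 9h_x f². -/
def tri {N : ℕ} (a b c : Fin N → ℝ) : Fin N → ℝ :=
  dot a b • c + dot c b • a - dot a c • b

section Toolkit

variable {V : Type*} [NormedAddCommGroup V] [NormedSpace ℝ V]

def uc (f : ℝ → ℝ → ℝ → V) : ℝ × ℝ × ℝ → V := fun p => f p.1 p.2.1 p.2.2

def Sm (f : ℝ → ℝ → ℝ → V) : Prop := ContDiff ℝ ((⊤ : ℕ∞) : WithTop ℕ∞) (uc f)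

theorem one_le_coe_top : (1 : WithTop ℕ∞) ≤ ((⊤ : ℕ∞) : WithTop ℕ∞) := by
  exact_mod_cast le_top

theorem succ_le_coe_top : ((⊤ : ℕ∞) : WithTop ℕ∞) + 1 ≤ ((⊤ : ℕ∞) : WithTop ℕ∞) := by
  exact_mod_cast le_top

variable {f g : ℝ → ℝ → ℝ → V}

theorem Sm.hasX' (hf : Sm f) (x y t : ℝ) :
    HasDerivAt (fun s => f s y t) (fderiv ℝ (uc f) (x, y, t) (1, 0, 0)) x := by
  have h1 : HasDerivAt (fun s : ℝ => ((s, y, t) : ℝ × ℝ × ℝ)) ((1:ℝ), (0:ℝ), (0:ℝ)) x :=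
    HasDerivAt.prodMk (hasDerivAt_id x) (HasDerivAt.prodMk (hasDerivAt_const x y) (hasDerivAt_const x t))
  exact ((hf.differentiable (by simp) (x, y, t)).hasFDerivAt).comp_hasDerivAt x h1

theorem Sm.hasY' (hf : Sm f) (x y t : ℝ) :
    HasDerivAt (fun s => f x s t) (fderiv ℝ (uc f) (x, y, t) (0, 1, 0)) y := by
  have h1 : HasDerivAt (fun s : ℝ => ((x, s, t) : ℝ × ℝ × ℝ)) ((0:ℝ), (1:ℝ), (0:ℝ)) y :=
    HasDerivAt.prodMk (hasDerivAt_const y x) (HasDerivAt.prodMk (hasDerivAt_id y) (hasDerivAt_const y t))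
  exact ((hf.differentiable (by simp) (x, y, t)).hasFDerivAt).comp_hasDerivAt y h1

theorem Sm.hasT' (hf : Sm f) (x y t : ℝ) :
    HasDerivAt (fun s => f x y s) (fderiv ℝ (uc f) (x, y, t) (0, 0, 1)) t := by
  have h1 : HasDerivAt (fun s : ℝ => ((x, y, s) : ℝ × ℝ × ℝ)) ((0:ℝ), (0:ℝ), (1:ℝ)) t :=
    HasDerivAt.prodMk (hasDerivAt_const t x) (HasDerivAt.prodMk (hasDerivAt_const t y) (hasDerivAt_id t))
  exact ((hf.differentiable (by simp) (x, y, t)).hasFDerivAt).comp_hasDerivAt t h1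

theorem pdx_fderiv (hf : Sm f) (x y t : ℝ) :
    pdx f x y t = fderiv ℝ (uc f) (x, y, t) (1, 0, 0) := (hf.hasX' x y t).deriv

theorem pdy_fderiv (hf : Sm f) (x y t : ℝ) :
    pdy f x y t = fderiv ℝ (uc f) (x, y, t) (0, 1, 0) := (hf.hasY' x y t).deriv

theorem pdt_fderiv (hf : Sm f) (x y t : ℝ) :
    pdt f x y t = fderiv ℝ (uc f) (x, y, t) (0, 0, 1) := (hf.hasT' x y t).deriv

theorem Sm.hasX (hf : Sm f) (x y t : ℝ) :
    HasDerivAt (fun s => f s y t) (pdx f x y t) x := by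
  rw [pdx_fderiv hf]; exact hf.hasX' x y t

theorem Sm.hasY (hf : Sm f) (x y t : ℝ) :
    HasDerivAt (fun s => f x s t) (pdy f x y t) y := by
  rw [pdy_fderiv hf]; exact hf.hasY' x y t

theorem Sm.hasT (hf : Sm f) (x y t : ℝ) :
    HasDerivAt (fun s => f x y s) (pdt f x y t) t := by
  rw [pdt_fderiv hf]; exact hf.hasT' x y t

theorem Sm.dX (hf : Sm f) : Sm (pdx f) := by
  have he : uc (pdx f) = fun p => fderiv ℝ (uc f) p ((1:ℝ), (0:ℝ), (0:ℝ)) := by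
    funext p
    exact pdx_fderiv hf p.1 p.2.1 p.2.2
  unfold Sm
  rw [he]
  exact (ContinuousLinearMap.apply ℝ V ((1:ℝ), (0:ℝ), (0:ℝ))).contDiff.comp
    (hf.fderiv_right succ_le_coe_top)

theorem Sm.dY (hf : Sm f) : Sm (pdy f) := by
  have he : uc (pdy f) = fun p => fderiv ℝ (uc f) p ((0:ℝ), (1:ℝ), (0:ℝ)) := by
    funext p
    exact pdy_fderiv hf p.1 p.2.1 p.2.2
  unfold Sm
  rw [he]
  exact (ContinuousLinearMap.apply ℝ V ((0:ℝ), (1:ℝ), (0:ℝ))).contDiff.comp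
    (hf.fderiv_right succ_le_coe_top)

theorem Sm.dT (hf : Sm f) : Sm (pdt f) := by
  have he : uc (pdt f) = fun p => fderiv ℝ (uc f) p ((0:ℝ), (0:ℝ), (1:ℝ)) := by
    funext p
    exact pdt_fderiv hf p.1 p.2.1 p.2.2
  unfold Sm
  rw [he]
  exact (ContinuousLinearMap.apply ℝ V ((0:ℝ), (0:ℝ), (1:ℝ))).contDiff.comp
    (hf.fderiv_right succ_le_coe_top)

theorem fderiv_fderiv_apply (hf : Sm f) (p : ℝ × ℝ × ℝ) (v w : ℝ × ℝ × ℝ) :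
    fderiv ℝ (fun q => fderiv ℝ (uc f) q v) p w = fderiv ℝ (fderiv ℝ (uc f)) p w v := by
  have hd : DifferentiableAt ℝ (fderiv ℝ (uc f)) p :=
    (hf.fderiv_right succ_le_coe_top).differentiable (by simp) p
  have h3 : HasFDerivAt (fun q => fderiv ℝ (uc f) q v)
      ((ContinuousLinearMap.apply ℝ V v).comp (fderiv ℝ (fderiv ℝ (uc f)) p)) p :=
    (ContinuousLinearMap.apply ℝ V v).hasFDerivAt.comp p hd.hasFDerivAt
  rw [h3.fderiv]
  rfl

theorem pd_swap_xy (hf : Sm f) : pdy (pdx f) = pdx (pdy f) := by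
  funext x y t
  have hd : DifferentiableAt ℝ (fderiv ℝ (uc f)) (x, y, t) :=
    (hf.fderiv_right succ_le_coe_top).differentiable (by simp) _
  have hsym := second_derivative_symmetric
      (f := uc f) (f' := fderiv ℝ (uc f)) (f'' := fderiv ℝ (fderiv ℝ (uc f)) (x, y, t))
      (fun q => (hf.differentiable (by simp) q).hasFDerivAt) hd.hasFDerivAt
      ((0:ℝ), (1:ℝ), (0:ℝ)) ((1:ℝ), (0:ℝ), (0:ℝ))
  have e1 : uc (pdx f) = fun p => fderiv ℝ (uc f) p ((1:ℝ), (0:ℝ), (0:ℝ)) := by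
    funext p; exact pdx_fderiv hf p.1 p.2.1 p.2.2
  have e2 : uc (pdy f) = fun p => fderiv ℝ (uc f) p ((0:ℝ), (1:ℝ), (0:ℝ)) := by
    funext p; exact pdy_fderiv hf p.1 p.2.1 p.2.2
  rw [pdy_fderiv hf.dX, pdx_fderiv hf.dY, e1, e2,
    fderiv_fderiv_apply hf, fderiv_fderiv_apply hf]
  exact hsym

end Toolkit
section Toolkit2

variable {V : Type*} [NormedAddCommGroup V] [NormedSpace ℝ V] {n : ℕ}

theorem hasDerivAt_dot {u v : ℝ → Fin n → ℝ} {u' v' : Fin n → ℝ} {s : ℝ}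
    (hu : HasDerivAt u u' s) (hv : HasDerivAt v v' s) :
    HasDerivAt (fun r => dot (u r) (v r)) (dot u' (v s) + dot (u s) v') s := by
  have hcoord : ∀ i : Fin n,
      HasDerivAt (fun r => u r i * v r i) (u' i * v s i + u s i * v' i) s := by
    intro i
    have hui : HasDerivAt (fun r => u r i) (u' i) s := by
      have := (ContinuousLinearMap.proj (R := ℝ) (φ := fun _ : Fin n => ℝ) i).hasFDerivAt.comp_hasDerivAt s hu
      exact this
    have hvi : HasDerivAt (fun r => v r i) (v' i) s := by
      have := (ContinuousLinearMap.proj (R := ℝ) (φ := fun _ : Fin n => ℝ) i).hasFDerivAt.comp_hasDerivAt s hv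
      exact this
    exact hui.mul hvi
  have hsum := HasDerivAt.fun_sum (u := (Finset.univ : Finset (Fin n)))
    (A := fun i r => u r i * v r i) (A' := fun i => u' i * v s i + u s i * v' i)
    (fun i _ => hcoord i)
  have : (∑ i : Fin n, (u' i * v s i + u s i * v' i)) = dot u' (v s) + dot (u s) v' := by
    simp [dot, Finset.sum_add_distrib]
  rw [this] at hsum
  exact hsum

-- dot algebra
theorem dot_add_left {a b c : Fin n → ℝ} : dot (a + b) c = dot a c + dot b c := by
  simp [dot, add_mul, Finset.sum_add_distrib]
theorem dot_add_right {a b c : Fin n → ℝ} : dot a (b + c) = dot a b + dot a c := by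
  simp [dot, mul_add, Finset.sum_add_distrib]
theorem dot_sub_left {a b c : Fin n → ℝ} : dot (a - b) c = dot a c - dot b c := by
  simp [dot, sub_mul, Finset.sum_sub_distrib]
theorem dot_sub_right {a b c : Fin n → ℝ} : dot a (b - c) = dot a b - dot a c := by
  simp [dot, mul_sub, Finset.sum_sub_distrib]
theorem dot_neg_left {a b : Fin n → ℝ} : dot (-a) b = -dot a b := by
  simp [dot]
theorem dot_neg_right {a b : Fin n → ℝ} : dot a (-b) = -dot a b := by
  simp [dot]
theorem dot_smul_left {r : ℝ} {a b : Fin n → ℝ} : dot (r • a) b = r * dot a b := by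
  simp [dot, Finset.mul_sum, mul_assoc]
theorem dot_smul_right {r : ℝ} {a b : Fin n → ℝ} : dot a (r • b) = r * dot a b := by
  simp [dot, Finset.mul_sum]; ring_nf
  exact Finset.sum_congr rfl fun i _ => by ring
theorem dot_comm {a b : Fin n → ℝ} : dot a b = dot b a := by
  exact Finset.sum_congr rfl fun i _ => mul_comm _ _
theorem dot_zero_left {a : Fin n → ℝ} : dot 0 a = 0 := by simp [dot]
theorem dot_zero_right {a : Fin n → ℝ} : dot a 0 = 0 := by simp [dot]

-- Sm closure
variable {f g : ℝ → ℝ → ℝ → V} {a b : ℝ → ℝ → ℝ → ℝ} {u v : ℝ → ℝ → ℝ → (Fin n → ℝ)}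

theorem Sm.add (hf : Sm f) (hg : Sm g) : Sm (fun x y t => f x y t + g x y t) :=
  ContDiff.add hf hg
theorem Sm.sub (hf : Sm f) (hg : Sm g) : Sm (fun x y t => f x y t - g x y t) :=
  ContDiff.sub hf hg
theorem Sm.neg (hf : Sm f) : Sm (fun x y t => -f x y t) := ContDiff.neg hf
theorem Sm.smul (ha : Sm a) (hf : Sm f) : Sm (fun x y t => a x y t • f x y t) :=
  ContDiff.smul ha hf
theorem Sm.mul (ha : Sm a) (hb : Sm b) : Sm (fun x y t => a x y t * b x y t) :=
  ContDiff.mul ha hb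
theorem Sm.pow (ha : Sm a) (m : ℕ) : Sm (fun x y t => a x y t ^ m) :=
  ContDiff.pow ha m
theorem Sm.const (c : V) : Sm (fun _ _ _ : ℝ => c) := contDiff_const
theorem Sm_dot (hu : Sm u) (hv : Sm v) : Sm (fun x y t => dot (u x y t) (v x y t)) := by
  have : uc (fun x y t => dot (u x y t) (v x y t))
      = fun p => ∑ i : Fin n, uc u p i * uc v p i := rfl
  unfold Sm
  rw [this]
  exact ContDiff.sum fun i _ => ((contDiff_pi.mp hu i).mul (contDiff_pi.mp hv i))

-- pd rules, function level
theorem pdx_add (hf : Sm f) (hg : Sm g) :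
    pdx (fun x y t => f x y t + g x y t) = fun x y t => pdx f x y t + pdx g x y t := by
  funext x y t; exact ((hf.hasX x y t).add (hg.hasX x y t)).deriv
theorem pdy_add (hf : Sm f) (hg : Sm g) :
    pdy (fun x y t => f x y t + g x y t) = fun x y t => pdy f x y t + pdy g x y t := by
  funext x y t; exact ((hf.hasY x y t).add (hg.hasY x y t)).deriv
theorem pdt_add (hf : Sm f) (hg : Sm g) :
    pdt (fun x y t => f x y t + g x y t) = fun x y t => pdt f x y t + pdt g x y t := by
  funext x y t; exact ((hf.hasT x y t).add (hg.hasT x y t)).deriv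

theorem pdx_sub (hf : Sm f) (hg : Sm g) :
    pdx (fun x y t => f x y t - g x y t) = fun x y t => pdx f x y t - pdx g x y t := by
  funext x y t; exact ((hf.hasX x y t).sub (hg.hasX x y t)).deriv
theorem pdy_sub (hf : Sm f) (hg : Sm g) :
    pdy (fun x y t => f x y t - g x y t) = fun x y t => pdy f x y t - pdy g x y t := by
  funext x y t; exact ((hf.hasY x y t).sub (hg.hasY x y t)).deriv
theorem pdt_sub (hf : Sm f) (hg : Sm g) :
    pdt (fun x y t => f x y t - g x y t) = fun x y t => pdt f x y t - pdt g x y t := by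
  funext x y t; exact ((hf.hasT x y t).sub (hg.hasT x y t)).deriv

theorem pdx_neg (hf : Sm f) :
    pdx (fun x y t => -f x y t) = fun x y t => -pdx f x y t := by
  funext x y t; exact (hf.hasX x y t).neg.deriv
theorem pdy_neg (hf : Sm f) :
    pdy (fun x y t => -f x y t) = fun x y t => -pdy f x y t := by
  funext x y t; exact (hf.hasY x y t).neg.deriv
theorem pdt_neg (hf : Sm f) :
    pdt (fun x y t => -f x y t) = fun x y t => -pdt f x y t := by
  funext x y t; exact (hf.hasT x y t).neg.deriv

theorem pdx_smul (ha : Sm a) (hf : Sm f) :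
    pdx (fun x y t => a x y t • f x y t)
      = fun x y t => a x y t • pdx f x y t + pdx a x y t • f x y t := by
  funext x y t; exact ((ha.hasX x y t).smul (hf.hasX x y t)).deriv
theorem pdy_smul (ha : Sm a) (hf : Sm f) :
    pdy (fun x y t => a x y t • f x y t)
      = fun x y t => a x y t • pdy f x y t + pdy a x y t • f x y t := by
  funext x y t; exact ((ha.hasY x y t).smul (hf.hasY x y t)).deriv
theorem pdt_smul (ha : Sm a) (hf : Sm f) :
    pdt (fun x y t => a x y t • f x y t)
      = fun x y t => a x y t • pdt f x y t + pdt a x y t • f x y t := by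
  funext x y t; exact ((ha.hasT x y t).smul (hf.hasT x y t)).deriv

theorem pdx_mul (ha : Sm a) (hb : Sm b) :
    pdx (fun x y t => a x y t * b x y t)
      = fun x y t => pdx a x y t * b x y t + a x y t * pdx b x y t := by
  funext x y t; exact ((ha.hasX x y t).mul (hb.hasX x y t)).deriv
theorem pdy_mul (ha : Sm a) (hb : Sm b) :
    pdy (fun x y t => a x y t * b x y t)
      = fun x y t => pdy a x y t * b x y t + a x y t * pdy b x y t := by
  funext x y t; exact ((ha.hasY x y t).mul (hb.hasY x y t)).deriv
theorem pdt_mul (ha : Sm a) (hb : Sm b) :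
    pdt (fun x y t => a x y t * b x y t)
      = fun x y t => pdt a x y t * b x y t + a x y t * pdt b x y t := by
  funext x y t; exact ((ha.hasT x y t).mul (hb.hasT x y t)).deriv

theorem pdx_sq (ha : Sm a) :
    pdx (fun x y t => a x y t ^ 2) = fun x y t => 2 * a x y t * pdx a x y t := by
  funext x y t
  have := ((ha.hasX x y t).pow 2).deriv
  simpa using (show pdx (fun x y t => a x y t ^ 2) x y t = _ from this)
theorem pdy_sq (ha : Sm a) :
    pdy (fun x y t => a x y t ^ 2) = fun x y t => 2 * a x y t * pdy a x y t := by
  funext x y t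
  have := ((ha.hasY x y t).pow 2).deriv
  simpa using (show pdy (fun x y t => a x y t ^ 2) x y t = _ from this)
theorem pdt_sq (ha : Sm a) :
    pdt (fun x y t => a x y t ^ 2) = fun x y t => 2 * a x y t * pdt a x y t := by
  funext x y t
  have := ((ha.hasT x y t).pow 2).deriv
  simpa using (show pdt (fun x y t => a x y t ^ 2) x y t = _ from this)
theorem pdx_cube (ha : Sm a) :
    pdx (fun x y t => a x y t ^ 3) = fun x y t => 3 * a x y t ^ 2 * pdx a x y t := by
  funext x y t
  have := ((ha.hasX x y t).pow 3).deriv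
  norm_num at this
  simpa using (show pdx (fun x y t => a x y t ^ 3) x y t = _ from this)
theorem pdy_cube (ha : Sm a) :
    pdy (fun x y t => a x y t ^ 3) = fun x y t => 3 * a x y t ^ 2 * pdy a x y t := by
  funext x y t
  have := ((ha.hasY x y t).pow 3).deriv
  norm_num at this
  simpa using (show pdy (fun x y t => a x y t ^ 3) x y t = _ from this)
theorem pdt_cube (ha : Sm a) :
    pdt (fun x y t => a x y t ^ 3) = fun x y t => 3 * a x y t ^ 2 * pdt a x y t := by
  funext x y t
  have := ((ha.hasT x y t).pow 3).deriv
  norm_num at this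
  simpa using (show pdt (fun x y t => a x y t ^ 3) x y t = _ from this)

theorem pdx_dot (hu : Sm u) (hv : Sm v) :
    pdx (fun x y t => dot (u x y t) (v x y t))
      = fun x y t => dot (pdx u x y t) (v x y t) + dot (u x y t) (pdx v x y t) := by
  funext x y t; exact (hasDerivAt_dot (hu.hasX x y t) (hv.hasX x y t)).deriv
theorem pdy_dot (hu : Sm u) (hv : Sm v) :
    pdy (fun x y t => dot (u x y t) (v x y t))
      = fun x y t => dot (pdy u x y t) (v x y t) + dot (u x y t) (pdy v x y t) := by
  funext x y t; exact (hasDerivAt_dot (hu.hasY x y t) (hv.hasY x y t)).deriv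
theorem pdt_dot (hu : Sm u) (hv : Sm v) :
    pdt (fun x y t => dot (u x y t) (v x y t))
      = fun x y t => dot (pdt u x y t) (v x y t) + dot (u x y t) (pdt v x y t) := by
  funext x y t; exact (hasDerivAt_dot (hu.hasT x y t) (hv.hasT x y t)).deriv

theorem pdx_const (c : V) : pdx (fun _ _ _ : ℝ => c) = fun _ _ _ => (0 : V) := by
  funext x y t; exact deriv_const x c
theorem pdy_const (c : V) : pdy (fun _ _ _ : ℝ => c) = fun _ _ _ => (0 : V) := by
  funext x y t; exact deriv_const y c
theorem pdt_const (c : V) : pdt (fun _ _ _ : ℝ => c) = fun _ _ _ => (0 : V) := by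
  funext x y t; exact deriv_const t c

end Toolkit2
set_option maxHeartbeats 2000000 in
theorem vector_Kaup_Newell_gives_mKP_system (N : ℕ) (hN : 1 ≤ N)
    (ψ φ : ℝ → ℝ → ℝ → (Fin N → ℝ))
    (hψ : ContDiff ℝ (⊤ : ℕ∞) (fun p : ℝ × ℝ × ℝ => ψ p.1 p.2.1 p.2.2))
    (hφ : ContDiff ℝ (⊤ : ℕ∞) (fun p : ℝ × ℝ × ℝ => φ p.1 p.2.1 p.2.2))
    (hKN₁ : ∀ x y t, pdy ψ x y t = pdx (pdx ψ) x y t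
        + (2 : ℝ) • pdx (fun x y t => tri (ψ x y t) (φ x y t) (ψ x y t)) x y t)
    (hKN₂ : ∀ x y t, pdy φ x y t = -pdx (pdx φ) x y t
        + (2 : ℝ) • pdx (fun x y t => tri (φ x y t) (ψ x y t) (φ x y t)) x y t)
    (hSym₁ : ∀ x y t, pdt ψ x y t = pdx (fun x y t => pdx (pdx ψ) x y t
        + (6 : ℝ) • tri (ψ x y t) (φ x y t) (pdx ψ x y t)
        + (6 : ℝ) • tri (ψ x y t) (tri (φ x y t) (ψ x y t) (φ x y t)) (ψ x y t)) x y t)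
    (hSym₂ : ∀ x y t, pdt φ x y t = pdx (fun x y t => pdx (pdx φ) x y t
        - (6 : ℝ) • tri (φ x y t) (ψ x y t) (pdx φ x y t)
        + (6 : ℝ) • tri (φ x y t) (tri (ψ x y t) (φ x y t) (ψ x y t)) (φ x y t)) x y t)
    (f g h p : ℝ → ℝ → ℝ → ℝ)
    (hdf : ∀ x y t, f x y t = -2 * dot (ψ x y t) (φ x y t))
    (hdg : ∀ x y t, g x y t = dot (ψ x y t) (ψ x y t))
    (hdh : ∀ x y t, h x y t = dot (φ x y t) (φ x y t))
    (hdp : ∀ x y t, p x y t = 2 * dot (ψ x y t) (pdx φ x y t)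
        - 2 * dot (pdx ψ x y t) (φ x y t) - 3 * f x y t ^ 2 + 6 * g x y t * h x y t) :
    (∀ x y t, 4 * pdt f x y t = pdx (pdx (pdx f)) x y t
        + 3 * pdy (fun x y t => p x y t - 2 * g x y t * h x y t) x y t
        + 6 * (pdx (pdx g) x y t * h x y t - g x y t * pdx (pdx h) x y t)
        - 2 * pdx (fun x y t => 6 * f x y t * g x y t * h x y t + f x y t ^ 3) x y t
        - 6 * p x y t * pdx f x y t) ∧
    (∀ x y t, pdx p x y t = pdy f x y t) ∧
    (∀ x y t, -2 * pdt g x y t = pdx (pdx (pdx g)) x y t - 3 * pdy (pdx g) x y t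
        + 6 * f x y t * (pdy g x y t - pdx (pdx g) x y t)
        + 3 * pdx (fun x y t => g x y t * (p x y t - pdx f x y t)) x y t
        + 6 * g x y t ^ 2 * pdx h x y t + 6 * g x y t * f x y t * pdx f x y t
        + 9 * pdx g x y t * f x y t ^ 2) ∧
    (∀ x y t, -2 * pdt h x y t = pdx (pdx (pdx h)) x y t + 3 * pdy (pdx h) x y t
        + 6 * f x y t * (pdy h x y t + pdx (pdx h) x y t)
        + 3 * pdx (fun x y t => h x y t * (p x y t + pdx f x y t)) x y t
        + 6 * h x y t ^ 2 * pdx g x y t + 6 * h x y t * f x y t * pdx f x y t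
        + 9 * pdx h x y t * f x y t ^ 2) := by
  have hsψ : Sm ψ := hψ
  have hsφ : Sm φ := hφ
  have hf2 : f = fun x y t => -2 * dot (ψ x y t) (φ x y t) :=
    funext fun x => funext fun y => funext fun t => hdf x y t
  have hg2 : g = fun x y t => dot (ψ x y t) (ψ x y t) :=
    funext fun x => funext fun y => funext fun t => hdg x y t
  have hh2 : h = fun x y t => dot (φ x y t) (φ x y t) :=
    funext fun x => funext fun y => funext fun t => hdh x y t
  have hp2 : p = fun x y t => 2 * dot (ψ x y t) (pdx φ x y t)
      - 2 * dot (pdx ψ x y t) (φ x y t)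
      - 3 * (-2 * dot (ψ x y t) (φ x y t)) ^ 2
      + 6 * dot (ψ x y t) (ψ x y t) * dot (φ x y t) (φ x y t) := by
    funext x y t
    rw [hdp x y t, hdf x y t, hdg x y t, hdh x y t]
  subst hf2 hg2 hh2 hp2
  have eKN₁ : pdy ψ = fun x y t => pdx (pdx ψ) x y t
      + (2 : ℝ) • pdx (fun x y t => tri (ψ x y t) (φ x y t) (ψ x y t)) x y t :=
    funext fun x => funext fun y => funext fun t => hKN₁ x y t
  have eKN₂ : pdy φ = fun x y t => -pdx (pdx φ) x y t
      + (2 : ℝ) • pdx (fun x y t => tri (φ x y t) (ψ x y t) (φ x y t)) x y t :=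
    funext fun x => funext fun y => funext fun t => hKN₂ x y t
  have eSym₁ : pdt ψ = fun x y t => pdx (fun x y t => pdx (pdx ψ) x y t
      + (6 : ℝ) • tri (ψ x y t) (φ x y t) (pdx ψ x y t)
      + (6 : ℝ) • tri (ψ x y t) (tri (φ x y t) (ψ x y t) (φ x y t)) (ψ x y t)) x y t :=
    funext fun x => funext fun y => funext fun t => hSym₁ x y t
  have eSym₂ : pdt φ = fun x y t => pdx (fun x y t => pdx (pdx φ) x y t
      - (6 : ℝ) • tri (φ x y t) (ψ x y t) (pdx φ x y t)
      + (6 : ℝ) • tri (φ x y t) (tri (ψ x y t) (φ x y t) (ψ x y t)) (φ x y t)) x y t :=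
    funext fun x => funext fun y => funext fun t => hSym₂ x y t
  refine ⟨?_, ?_, ?_, ?_⟩
  · intro x y t
    simp (config := { maxDischargeDepth := 50 }) only
      [tri, eKN₁, eKN₂, eSym₁, eSym₂, pd_swap_xy,
       pdx_add, pdy_add, pdt_add, pdx_sub, pdy_sub, pdt_sub, pdx_neg, pdy_neg, pdt_neg,
       pdx_smul, pdy_smul, pdt_smul, pdx_mul, pdy_mul, pdt_mul,
       pdx_sq, pdy_sq, pdt_sq, pdx_cube, pdy_cube, pdt_cube,
       pdx_dot, pdy_dot, pdt_dot, pdx_const, pdy_const, pdt_const,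
       Sm.add, Sm.sub, Sm.neg, Sm.smul, Sm.mul, Sm.pow, Sm.const, Sm_dot,
       Sm.dX, Sm.dY, Sm.dT, hsψ, hsφ,
       dot_add_left, dot_add_right, dot_sub_left, dot_sub_right, dot_neg_left, dot_neg_right,
       dot_smul_left, dot_smul_right, dot_zero_left, dot_zero_right]
    simp only [dot_comm]
    ring
  · intro x y t
    simp (config := { maxDischargeDepth := 50 }) only
      [tri, eKN₁, eKN₂, eSym₁, eSym₂, pd_swap_xy,
       pdx_add, pdy_add, pdt_add, pdx_sub, pdy_sub, pdt_sub, pdx_neg, pdy_neg, pdt_neg,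
       pdx_smul, pdy_smul, pdt_smul, pdx_mul, pdy_mul, pdt_mul,
       pdx_sq, pdy_sq, pdt_sq, pdx_cube, pdy_cube, pdt_cube,
       pdx_dot, pdy_dot, pdt_dot, pdx_const, pdy_const, pdt_const,
       Sm.add, Sm.sub, Sm.neg, Sm.smul, Sm.mul, Sm.pow, Sm.const, Sm_dot,
       Sm.dX, Sm.dY, Sm.dT, hsψ, hsφ,
       dot_add_left, dot_add_right, dot_sub_left, dot_sub_right, dot_neg_left, dot_neg_right,
       dot_smul_left, dot_smul_right, dot_zero_left, dot_zero_right]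
    simp only [dot_comm]
    ring
  · intro x y t
    simp (config := { maxDischargeDepth := 50 }) only
      [tri, eKN₁, eKN₂, eSym₁, eSym₂, pd_swap_xy,
       pdx_add, pdy_add, pdt_add, pdx_sub, pdy_sub, pdt_sub, pdx_neg, pdy_neg, pdt_neg,
       pdx_smul, pdy_smul, pdt_smul, pdx_mul, pdy_mul, pdt_mul,
       pdx_sq, pdy_sq, pdt_sq, pdx_cube, pdy_cube, pdt_cube,
       pdx_dot, pdy_dot, pdt_dot, pdx_const, pdy_const, pdt_const,
       Sm.add, Sm.sub, Sm.neg, Sm.smul, Sm.mul, Sm.pow, Sm.const, Sm_dot,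
       Sm.dX, Sm.dY, Sm.dT, hsψ, hsφ,
       dot_add_left, dot_add_right, dot_sub_left, dot_sub_right, dot_neg_left, dot_neg_right,
       dot_smul_left, dot_smul_right, dot_zero_left, dot_zero_right]
    simp only [dot_comm]
    ring
  · intro x y t
    simp (config := { maxDischargeDepth := 50 }) only
      [tri, eKN₁, eKN₂, eSym₁, eSym₂, pd_swap_xy,
       pdx_add, pdy_add, pdt_add, pdx_sub, pdy_sub, pdt_sub, pdx_neg, pdy_neg, pdt_neg,
       pdx_smul, pdy_smul, pdt_smul, pdx_mul, pdy_mul, pdt_mul,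
       pdx_sq, pdy_sq, pdt_sq, pdx_cube, pdy_cube, pdt_cube,
       pdx_dot, pdy_dot, pdt_dot, pdx_const, pdy_const, pdt_const,
       Sm.add, Sm.sub, Sm.neg, Sm.smul, Sm.mul, Sm.pow, Sm.const, Sm_dot,
       Sm.dX, Sm.dY, Sm.dT, hsψ, hsφ,
       dot_add_left, dot_add_right, dot_sub_left, dot_sub_right, dot_neg_left, dot_neg_right,
       dot_smul_left, dot_smul_right, dot_zero_left, dot_zero_right]
    simp only [dot_comm]
    ring
end
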